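/- Let w ∈ 𝐒(ℝ₊ˣ), λ ∈ ℂ, and k ∈ ℕ, and suppose that the j-th derivative of the (entire) Mellin transform M(w) vanishes at λ for every 0 ≤ j ≤ k. Then the function f_{λ,k}(x) = x^{−λ}(log x)^k satisfies (w ∗ f_{λ,k})(x) = 0 for every x > 0; that is, w annihilates x^{−λ}(log x)^k under multiplicative convolution whenever λ is a zero of M(w) of multiplicity at least k+1. -/

import Mathlib

open MeasureTheory Set Filter Asymptotics

/-- The Mellin transform `M(g)(s) = ∫₀^∞ g(x) x^s dx/x`. -/
noncomputable def mellinT (g : ℝ → ℂ) (s : ℂ) : ℂ :=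
  ∫ x in Set.Ioi (0:ℝ), g x * (x : ℂ) ^ s / (x : ℂ)

/-- The multiplicative convolution `(f ∗ g)(x) = ∫₀^∞ f(x/y) g(y) dy/y`. -/
noncomputable def mulConv (f g : ℝ → ℂ) (x : ℝ) : ℂ :=
  ∫ y in Set.Ioi (0:ℝ), f (x / y) * g y / (y : ℂ)

/-- The strong Schwartz space `𝐒(ℝ₊ˣ)`: smooth functions on `(0,∞)` such that
`sup_{x>0} |x^m f⁽ⁿ⁾(x)| < ∞` for every `m : ℤ` and `n : ℕ`. -/
def IsStrongSchwartz (f : ℝ → ℂ) : Prop :=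
  ContDiffOn ℝ (⊤ : ℕ∞) f (Set.Ioi 0) ∧
  ∀ (m : ℤ) (n : ℕ), ∃ C : ℝ,
    ∀ x ∈ Set.Ioi (0:ℝ), x ^ m * ‖iteratedDerivWithin n f (Set.Ioi 0) x‖ ≤ C

/-- `L¹_loc,poly(ℝ₊ˣ)`: locally integrable functions on `(0,∞)` with `h(x) = O(x^a)`
as `x → ∞` and `h(x) = O(x^(-a))` as `x → 0⁺` for some `a ≥ 0`. -/
def IsLocPoly (h : ℝ → ℂ) : Prop :=
  MeasureTheory.LocallyIntegrableOn h (Set.Ioi 0) ∧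
  ∃ a : ℝ, 0 ≤ a ∧
    h =O[Filter.atTop] (fun x : ℝ => x ^ a) ∧
    h =O[nhdsWithin 0 (Set.Ioi 0)] (fun x : ℝ => x ^ (-a))

/-- `h⁺(x) = h(x)` for `x < 1`, `0` otherwise. -/
noncomputable def hPlus (h : ℝ → ℂ) (x : ℝ) : ℂ := if x < 1 then h x else 0

/-- `h⁻(x) = h(x)` for `x ≥ 1`, `0` otherwise. -/
noncomputable def hMinus (h : ℝ → ℂ) (x : ℝ) : ℂ := if 1 ≤ x then h x else 0

lemma ss_bound (w : ℝ → ℂ) (hw : IsStrongSchwartz w) (m : ℤ) :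
    ∃ C : ℝ, 0 ≤ C ∧ ∀ x : ℝ, 0 < x → ‖w x‖ ≤ C * x ^ (-m) := by
  obtain ⟨C, hC⟩ := hw.2 m 0
  refine ⟨C, ?_, ?_⟩
  · have := hC 1 (by norm_num)
    simp only [iteratedDerivWithin_zero, one_zpow, one_mul] at this
    exact (norm_nonneg _).trans this
  · intro x hx
    have h := hC x hx
    simp only [iteratedDerivWithin_zero] at h
    have hxm : (0:ℝ) < x ^ m := zpow_pos hx m
    rw [zpow_neg, ← div_eq_mul_inv, le_div_iff₀ hxm, mul_comm]
    exact h

lemma ss_isBigO_top (w : ℝ → ℂ) (hw : IsStrongSchwartz w) (a : ℝ) :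
    w =O[atTop] (fun x : ℝ => x ^ (-a)) := by
  obtain ⟨C, hC0, hC⟩ := ss_bound w hw ⌈a⌉
  rw [isBigO_iff]
  refine ⟨C, ?_⟩
  filter_upwards [eventually_ge_atTop 1] with x hx1
  have hx : (0:ℝ) < x := lt_of_lt_of_le one_pos hx1
  have h1 : ‖w x‖ ≤ C * x ^ (-(⌈a⌉:ℤ)) := hC x hx
  have h2 : x ^ (-(⌈a⌉:ℤ)) ≤ x ^ (-a) := by
    rw [← Real.rpow_intCast x (-(⌈a⌉:ℤ))]
    apply Real.rpow_le_rpow_of_exponent_le hx1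
    push_cast
    linarith [Int.le_ceil a]
  have : ‖x ^ (-a)‖ = x ^ (-a) := Real.norm_of_nonneg (Real.rpow_nonneg hx.le _)
  rw [this]
  calc ‖w x‖ ≤ C * x ^ (-(⌈a⌉:ℤ)) := h1
    _ ≤ C * x ^ (-a) := by exact mul_le_mul_of_nonneg_left h2 hC0

lemma ss_isBigO_bot (w : ℝ → ℂ) (hw : IsStrongSchwartz w) (b : ℝ) :
    w =O[nhdsWithin 0 (Set.Ioi 0)] (fun x : ℝ => x ^ (-b)) := by
  obtain ⟨C, hC0, hC⟩ := ss_bound w hw ⌊b⌋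
  rw [isBigO_iff]
  refine ⟨C, ?_⟩
  have h1 : Set.Ioo (0:ℝ) 1 ∈ nhdsWithin 0 (Set.Ioi 0) := by
    apply Ioo_mem_nhdsGT_of_mem
    constructor <;> norm_num
  filter_upwards [h1] with x hx
  have h1 : ‖w x‖ ≤ C * x ^ (-(⌊b⌋:ℤ)) := hC x hx.1
  have h2 : x ^ (-(⌊b⌋:ℤ)) ≤ x ^ (-b) := by
    rw [← Real.rpow_intCast x (-(⌊b⌋:ℤ))]
    apply Real.rpow_le_rpow_of_exponent_ge hx.1 hx.2.le
    push_cast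
    linarith [Int.floor_le b]
  have : ‖x ^ (-b)‖ = x ^ (-b) := Real.norm_of_nonneg (Real.rpow_nonneg hx.1.le _)
  rw [this]
  calc ‖w x‖ ≤ C * x ^ (-(⌊b⌋:ℤ)) := h1
    _ ≤ C * x ^ (-b) := mul_le_mul_of_nonneg_left h2 hC0

/-- `g_j(t) = (log t)^j • w(t)`. -/
noncomputable def gj (w : ℝ → ℂ) (j : ℕ) : ℝ → ℂ := fun t => (Real.log t) ^ j • w t

lemma gj_succ (w : ℝ → ℂ) (j : ℕ) :
    (fun t : ℝ => Real.log t • gj w j t) = gj w (j+1) := by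
  funext t
  simp only [gj, smul_smul, pow_succ']

lemma gj_isBigO_top (w : ℝ → ℂ) (hw : IsStrongSchwartz w) (j : ℕ) (a : ℝ) :
    gj w j =O[atTop] (fun x : ℝ => x ^ (-a)) := by
  induction j generalizing a with
  | zero =>
    have : gj w 0 = w := by funext t; simp [gj]
    rw [this]; exact ss_isBigO_top w hw a
  | succ n ih =>
    rw [← gj_succ]
    exact isBigO_rpow_top_log_smul (lt_add_one a) (ih (a+1))

lemma gj_isBigO_bot (w : ℝ → ℂ) (hw : IsStrongSchwartz w) (j : ℕ) (b : ℝ) :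
    gj w j =O[nhdsWithin 0 (Set.Ioi 0)] (fun x : ℝ => x ^ (-b)) := by
  induction j generalizing b with
  | zero =>
    have : gj w 0 = w := by funext t; simp [gj]
    rw [this]; exact ss_isBigO_bot w hw b
  | succ n ih =>
    rw [← gj_succ]
    exact isBigO_rpow_zero_log_smul (by linarith : b - 1 < b) (ih (b-1))

lemma gj_locInt (w : ℝ → ℂ) (hw : IsStrongSchwartz w) (j : ℕ) :
    LocallyIntegrableOn (gj w j) (Set.Ioi 0) := by
  apply ContinuousOn.locallyIntegrableOn _ measurableSet_Ioi
  refine ContinuousOn.smul (f := fun t : ℝ => Real.log t ^ j) (g := w) ?_ ?_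
  · exact (Real.continuousOn_log.mono (fun x hx => ne_of_gt hx)).pow j
  · exact hw.1.continuousOn

lemma mellinT_eq (w : ℝ → ℂ) : mellinT w = mellin w := by
  funext s
  unfold mellinT mellin
  apply setIntegral_congr_fun measurableSet_Ioi
  intro x hx
  have hx0 : (x:ℂ) ≠ 0 := Complex.ofReal_ne_zero.mpr (ne_of_gt hx)
  simp only [smul_eq_mul, Complex.cpow_sub _ _ hx0, Complex.cpow_one]
  ring

lemma gj_hasDerivAt (w : ℝ → ℂ) (hw : IsStrongSchwartz w) (j : ℕ) (s : ℂ) :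
    HasDerivAt (mellin (gj w j)) (mellin (gj w (j+1)) s) s := by
  have h := mellin_hasDerivAt_of_isBigO_rpow (gj_locInt w hw j)
    (gj_isBigO_top w hw j (s.re + 1)) (by linarith)
    (gj_isBigO_bot w hw j (s.re - 1)) (by linarith)
  rw [gj_succ] at h
  exact h.2

lemma iteratedDeriv_mellinT (w : ℝ → ℂ) (hw : IsStrongSchwartz w) (j : ℕ) (s : ℂ) :
    iteratedDeriv j (mellinT w) s = mellin (gj w j) s := by
  induction j generalizing s with
  | zero =>
    have : gj w 0 = w := by funext t; simp [gj]
    rw [iteratedDeriv_zero, this, mellinT_eq]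
  | succ n ih =>
    rw [iteratedDeriv_succ]
    have h1 : iteratedDeriv n (mellinT w) = mellin (gj w n) := funext ih
    rw [h1, (gj_hasDerivAt w hw n s).deriv]

lemma gj_mellinConv (w : ℝ → ℂ) (hw : IsStrongSchwartz w) (j : ℕ) (s : ℂ) :
    MellinConvergent (gj w j) s :=
  mellinConvergent_of_isBigO_rpow (gj_locInt w hw j)
    (gj_isBigO_top w hw j (s.re + 1)) (by linarith)
    (gj_isBigO_bot w hw j (s.re - 1)) (by linarith)

lemma gj_eq (w : ℝ → ℂ) (j : ℕ) (y : ℝ) :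
    gj w j y = ((Real.log y : ℂ)) ^ j * w y := by
  simp [gj, Complex.real_smul]

lemma cpow_div_split {x y : ℝ} (hx : 0 < x) (hy : 0 < y) (s : ℂ) :
    ((x / y : ℝ) : ℂ) ^ (-s) = (x:ℂ) ^ (-s) * (y:ℂ) ^ s := by
  rw [div_eq_mul_inv]
  rw [show ((x * y⁻¹ : ℝ) : ℂ) = ((x:ℝ):ℂ) * ((y⁻¹:ℝ):ℂ) by push_cast; ring]
  rw [Complex.mul_cpow_ofReal_nonneg hx.le (inv_nonneg.mpr hy.le)]
  congr 1
  rw [Complex.ofReal_inv, Complex.inv_cpow, Complex.cpow_neg, inv_inv]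
  rw [Complex.arg_ofReal_of_nonneg hy.le]
  exact Real.pi_ne_zero.symm

lemma pointwise_id (w : ℝ → ℂ) (lam : ℂ) (k : ℕ) {x y : ℝ} (hx : 0 < x) (hy : 0 < y) :
    w y * (((x / y : ℝ) : ℂ) ^ (-lam) * (Real.log (x / y) : ℂ) ^ k) / (y : ℂ)
    = ∑ m ∈ Finset.range (k+1),
        ((x:ℂ) ^ (-lam) * (Real.log x : ℂ) ^ m * (-1:ℂ) ^ (k-m) * (k.choose m : ℂ)) *
          ((y:ℂ) ^ (lam - 1) * gj w (k-m) y) := by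
  have hy0 : (y:ℂ) ≠ 0 := Complex.ofReal_ne_zero.mpr hy.ne'
  have hlog : ((Real.log (x / y) : ℝ) : ℂ) = (Real.log x : ℂ) - (Real.log y : ℂ) := by
    rw [Real.log_div hx.ne' hy.ne']; push_cast; ring
  rw [cpow_div_split hx hy, hlog, sub_eq_add_neg, add_pow]
  rw [Finset.mul_sum, Finset.mul_sum, Finset.sum_div]
  refine Finset.sum_congr rfl fun m hm => ?_
  rw [gj_eq, Complex.cpow_sub _ _ hy0, Complex.cpow_one, neg_pow]
  ring

/-- if `M(w)⁽ʲ⁾(λ) = 0` for all `0 ≤ j ≤ k` then `w` annihilates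
`f_{λ,k}(x) = x^{−λ}(log x)^k` under multiplicative convolution:
`(w ∗ f_{λ,k})(x) = ∫₀^∞ w(y) f_{λ,k}(x/y) dy/y = 0` for all `x > 0`. -/
theorem annihilates_monomial_of_mellin_zero (w : ℝ → ℂ) (hw : IsStrongSchwartz w)
    (lam : ℂ) (k : ℕ)
    (hzero : ∀ j : ℕ, j ≤ k → iteratedDeriv j (mellinT w) lam = 0) :
    ∀ x : ℝ, 0 < x →
      (∫ y in Set.Ioi (0:ℝ),
        w y * (((x / y : ℝ) : ℂ) ^ (-lam) * (Real.log (x / y) : ℂ) ^ k) / (y : ℂ)) = 0 := by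
  intro x hx
  have hmel : ∀ m : ℕ, m ≤ k → mellin (gj w m) lam = 0 := fun m hm => by
    rw [← iteratedDeriv_mellinT w hw m lam]; exact hzero m hm
  set c : ℕ → ℂ := fun m =>
    (x:ℂ) ^ (-lam) * (Real.log x : ℂ) ^ m * (-1:ℂ) ^ (k-m) * (k.choose m : ℂ) with hc
  have hint : ∀ m ∈ Finset.range (k+1),
      Integrable (fun y : ℝ => c m * ((y:ℂ) ^ (lam - 1) * gj w (k-m) y))
        (volume.restrict (Set.Ioi (0:ℝ))) := by
    intro m _
    have h := gj_mellinConv w hw (k-m) lam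
    unfold MellinConvergent at h
    simp only [smul_eq_mul] at h
    exact h.const_mul (c m)
  calc (∫ y in Set.Ioi (0:ℝ),
        w y * (((x / y : ℝ) : ℂ) ^ (-lam) * (Real.log (x / y) : ℂ) ^ k) / (y : ℂ))
      = ∫ y in Set.Ioi (0:ℝ), ∑ m ∈ Finset.range (k+1),
          c m * ((y:ℂ) ^ (lam - 1) * gj w (k-m) y) := by
        apply setIntegral_congr_fun measurableSet_Ioi
        intro y hy
        exact pointwise_id w lam k hx hy
    _ = ∑ m ∈ Finset.range (k+1), ∫ y in Set.Ioi (0:ℝ),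
          c m * ((y:ℂ) ^ (lam - 1) * gj w (k-m) y) := integral_finset_sum _ hint
    _ = ∑ m ∈ Finset.range (k+1), c m * mellin (gj w (k-m)) lam := by
        refine Finset.sum_congr rfl fun m _ => ?_
        rw [integral_const_mul]
        simp [mellin, smul_eq_mul]
    _ = 0 := by
        refine Finset.sum_eq_zero fun m hm => ?_
        rw [hmel (k-m) (Nat.sub_le k m), mul_zero]
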